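/- A first order differential calculus (Γ,d) on a Hopf algebra H is bicovariant if and only if the comultiplication Δ: H→H⊗H extends to a morphism of first order differential calculi Δ¹: Γ→Ω¹(H⊗H) = (Γ⊗H)⊕(H⊗Γ), i.e. a map covering Δ, linear over the (A=H)-bimodule structure induced by Δ, and satisfying Δ¹∘d = d_⊗∘Δ where d_⊗ = d⊗id + id⊗d. In this case Δ¹ = Δ_Γ + _ΓΔ is necessarily the sum of the right and left H-coactions on Γ. -/

import Mathlib

open TensorProduct

noncomputable section

namespace NCG

variable {k : Type*} [CommRing k]

/-! ## Coactions -/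

section Coactions

variable {H : Type*} [AddCommMonoid H] [Module k H] [Coalgebra k H]
variable {M : Type*} [AddCommMonoid M] [Module k M]

/-- `ρ : M → M ⊗ H` is a (counital, coassociative) right `H`-coaction. -/
def IsRightCoaction (ρ : M →ₗ[k] M ⊗[k] H) : Prop :=
  (LinearMap.lTensor M (Coalgebra.counit (R := k) (A := H)) ∘ₗ ρ
      = (TensorProduct.mk k M k).flip 1) ∧
  ((TensorProduct.assoc k M H H).toLinearMap ∘ₗ LinearMap.rTensor H ρ ∘ₗ ρ
      = LinearMap.lTensor M (Coalgebra.comul (R := k) (A := H)) ∘ₗ ρ)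

/-- `lam : M → H ⊗ M` is a left `H`-coaction. -/
def IsLeftCoaction (lam : M →ₗ[k] H ⊗[k] M) : Prop :=
  (LinearMap.rTensor M (Coalgebra.counit (R := k) (A := H)) ∘ₗ lam
      = TensorProduct.mk k k M 1) ∧
  ((TensorProduct.assoc k H H M).symm.toLinearMap ∘ₗ LinearMap.lTensor H lam ∘ₗ lam
      = LinearMap.rTensor M (Coalgebra.comul (R := k) (A := H)) ∘ₗ lam)

end Coactions

/-! ## Comodule algebras, coinvariants, Hopf–Galois extensions -/

section ComodAlg

variable (k) in
/-- A right `H`-comodule algebra structure on `A`: an algebra morphism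
`ρ : A → A ⊗ H` which is a right `H`-coaction. -/
structure ComodAlg (H : Type*) [Ring H] [Bialgebra k H]
    (A : Type*) [Ring A] [Algebra k A] where
  ρ : A →ₐ[k] A ⊗[k] H
  coaction : IsRightCoaction (k := k) ρ.toLinearMap

variable {H : Type*} [Ring H] [Bialgebra k H]
variable {A : Type*} [Ring A] [Algebra k A]

/-- The coinvariant subalgebra `B = A^{co H}` (as a submodule). -/
def ComodAlg.coinv (S : ComodAlg k H A) : Submodule k A where
  carrier := {a | S.ρ a = a ⊗ₜ[k] (1 : H)}
  add_mem' := by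
    intro a b ha hb
    simp only [Set.mem_setOf_eq] at *
    rw [map_add, ha, hb, TensorProduct.add_tmul]
  zero_mem' := by simp
  smul_mem' := by
    intro c a ha
    simp only [Set.mem_setOf_eq] at *
    rw [map_smul, ha, TensorProduct.smul_tmul']

lemma ComodAlg.one_mem_coinv (S : ComodAlg k H A) : (1 : A) ∈ S.coinv := by
  show S.ρ 1 = _
  rw [map_one, Algebra.TensorProduct.one_def]

/-- The lift `χ' : A ⊗ A → A ⊗ H`, `a ⊗ a' ↦ (a ⊗ 1) · ρ(a') = a a'₍₀₎ ⊗ a'₍₁₎`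
of the canonical Hopf–Galois map. -/
def chiAux (S : ComodAlg k H A) : A ⊗[k] A →ₗ[k] A ⊗[k] H :=
  TensorProduct.lift
    ((LinearMap.mul k (A ⊗[k] H) ∘ₗ (TensorProduct.mk k A H).flip 1).compl₂ S.ρ.toLinearMap)

/-- The relations defining the balanced tensor product `A ⊗_B A` over a
subalgebra (submodule) `B ⊆ A`. -/
def balRel (B : Submodule k A) : Submodule k (A ⊗[k] A) :=
  Submodule.span k
    {x | ∃ (a a' : A) (b : B), x = (a * (b : A)) ⊗ₜ[k] a' - a ⊗ₜ[k] ((b : A) * a')}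

/-- The balanced tensor product `A ⊗_B A`. -/
abbrev TensorOver (B : Submodule k A) : Type _ := (A ⊗[k] A) ⧸ balRel B

/-- `B = A^{co H} ⊆ A` is a Hopf–Galois extension:  the canonical map
`χ : A ⊗_B A → A ⊗ H` is bijective, i.e. its lift `χ'` is surjective with
kernel exactly the balanced relations. -/
def ComodAlg.IsHopfGalois (S : ComodAlg k H A) : Prop :=
  Function.Surjective (chiAux S) ∧ LinearMap.ker (chiAux S) = balRel S.coinv

/-- The canonical Hopf–Galois map `χ : A ⊗_B A → A ⊗ H` on the balanced
tensor product. -/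
def chiQ (S : ComodAlg k H A) (h : balRel S.coinv ≤ LinearMap.ker (chiAux S)) :
    TensorOver S.coinv →ₗ[k] A ⊗[k] H :=
  Submodule.liftQ _ (chiAux S) h

end ComodAlg

section HopfGalois

variable {H : Type*} [Ring H] [HopfAlgebra k H]
variable {A : Type*} [Ring A] [Algebra k A]

/-- A strong connection (in the sense of Theorem 3.7): a linear map
`ℓ : H → A ⊗ A` satisfying the four identities characterising faithfully
flat Hopf–Galois extensions (principal comodule algebras). -/
def IsStrongConnection (S : ComodAlg k H A) (ℓ : H →ₗ[k] A ⊗[k] A) : Prop :=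
  ℓ 1 = 1 ⊗ₜ[k] 1 ∧
  chiAux S ∘ₗ ℓ = TensorProduct.mk k A H 1 ∧
  LinearMap.mul' k A ∘ₗ ℓ =
    Algebra.linearMap k A ∘ₗ Coalgebra.counit (R := k) (A := H) ∧
  LinearMap.lTensor A S.ρ.toLinearMap ∘ₗ ℓ =
    (TensorProduct.assoc k A A H).toLinearMap ∘ₗ LinearMap.rTensor H ℓ ∘ₗ
      Coalgebra.comul (R := k) (A := H) ∧
  LinearMap.rTensor A S.ρ.toLinearMap ∘ₗ ℓ =
    LinearMap.rTensor A (TensorProduct.comm k H A).toLinearMap ∘ₗ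
      (TensorProduct.assoc k H A A).symm.toLinearMap ∘ₗ
      TensorProduct.map (HopfAlgebra.antipode (R := k)) ℓ ∘ₗ
      Coalgebra.comul (R := k) (A := H)

/-- A quantum principal bundle: a faithfully flat Hopf–Galois extension
`B = A^{co H} ⊆ A`, encoded (following Theorem 3.7 = Th. 6.19/6.20 of
Brzeziński–Wisbauer/Hajac et al.) as a Hopf–Galois extension admitting a
strong connection. -/
def ComodAlg.IsQPB (S : ComodAlg k H A) : Prop :=
  S.IsHopfGalois ∧ ∃ ℓ : H →ₗ[k] A ⊗[k] A, IsStrongConnection S ℓ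

end HopfGalois

/-! ## Differential graded algebras and differential calculi -/

section DGA

variable (k) in
/-- A differential graded algebra: an `ℕ`-graded algebra `Ω` together with a
degree `1` differential squaring to zero and satisfying the graded Leibniz
rule. -/
structure DGA (Ω : Type*) [Ring Ω] [Algebra k Ω] where
  grading : ℕ → Submodule k Ω
  gradedAlgebra : GradedAlgebra grading
  d : Ω →ₗ[k] Ω
  d_mem : ∀ n, ∀ x ∈ grading n, d x ∈ grading (n + 1)
  d_d : ∀ x, d (d x) = 0
  leibniz : ∀ n, ∀ ω ∈ grading n, ∀ η,
    d (ω * η) = d ω * η + ((-1 : k) ^ n) • (ω * d η)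

variable {Ω : Type*} [Ring Ω] [Algebra k Ω]

/-- Projection onto the degree `n` component of a graded algebra. -/
def DGA.projN (C : DGA k Ω) (n : ℕ) : Ω →ₗ[k] Ω :=
  letI := C.gradedAlgebra
  (C.grading n).subtype ∘ₗ DirectSum.component k ℕ (fun i => ↥(C.grading i)) n ∘ₗ
    (DirectSum.decomposeLinearEquiv C.grading).toLinearMap

/-- The sign operator `ς` of a graded algebra, acting by `(-1)^n` in degree `n`. -/
def DGA.sign (C : DGA k Ω) : Ω →ₗ[k] Ω :=
  letI := C.gradedAlgebra
  (DirectSum.toModule k ℕ Ω fun n => ((-1 : k) ^ n) • (C.grading n).subtype) ∘ₗ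
    (DirectSum.decomposeLinearEquiv C.grading).toLinearMap

variable {Ξ : Type*} [Ring Ξ] [Algebra k Ξ]
variable {M : Type*} [AddCommGroup M] [Module k M]

/-- The graded (Koszul) braiding `Ξ ⊗ M → M ⊗ Ξ`, `θ ⊗ m ↦ (-1)^{|θ||m|} m ⊗ θ`,
where the sign on `M` is implemented by the sign operator `s`. -/
def gradedBraid (CN : DGA k Ξ) (s : M →ₗ[k] M) : Ξ ⊗[k] M →ₗ[k] M ⊗[k] Ξ :=
  letI := CN.gradedAlgebra
  TensorProduct.lift
    ((DirectSum.toModule k ℕ (M →ₗ[k] M ⊗[k] Ξ) fun j =>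
        (LinearMap.llcomp k M M (M ⊗[k] Ξ)).flip (s ^ j) ∘ₗ
          (TensorProduct.mk k M Ξ).flip ∘ₗ (CN.grading j).subtype) ∘ₗ
      (DirectSum.decomposeLinearEquiv CN.grading).toLinearMap)

/-- The multiplication of the graded (Koszul-signed) tensor product
`(m ⊗ θ)(m' ⊗ θ') = (-1)^{|θ||m'|} m m' ⊗ θ θ'`, for a (possibly non-unital
carrier) `M` with multiplication `mulM` and sign operator `sM`, and a graded
algebra `Ξ`. -/
def koszulMulGen (mulM : M ⊗[k] M →ₗ[k] M) (mulN : Ξ ⊗[k] Ξ →ₗ[k] Ξ)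
    (CN : DGA k Ξ) (sM : M →ₗ[k] M) :
    (M ⊗[k] Ξ) ⊗[k] (M ⊗[k] Ξ) →ₗ[k] M ⊗[k] Ξ :=
  TensorProduct.map mulM mulN ∘ₗ
    (TensorProduct.assoc k (M ⊗[k] M) Ξ Ξ).toLinearMap ∘ₗ
    LinearMap.rTensor Ξ
      ((TensorProduct.assoc k M M Ξ).symm.toLinearMap ∘ₗ
        LinearMap.lTensor M (gradedBraid CN sM) ∘ₗ
        (TensorProduct.assoc k M Ξ M).toLinearMap) ∘ₗ
    (TensorProduct.assoc k (M ⊗[k] Ξ) M Ξ).symm.toLinearMap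

/-- The Koszul multiplication on the tensor product of two graded algebras. -/
def koszulMul (CM : DGA k Ω) (CN : DGA k Ξ) :
    (Ω ⊗[k] Ξ) ⊗[k] (Ω ⊗[k] Ξ) →ₗ[k] Ω ⊗[k] Ξ :=
  koszulMulGen (LinearMap.mul' k Ω) (LinearMap.mul' k Ξ) CN CM.sign

/-- The tensor product differential `d_⊗ = d ⊗ 1 + ς ⊗ d'`. -/
def dTensorGen (dM : M →ₗ[k] M) (sM : M →ₗ[k] M) {N : Type*} [AddCommGroup N]
    [Module k N] (dN : N →ₗ[k] N) : M ⊗[k] N →ₗ[k] M ⊗[k] N :=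
  TensorProduct.map dM LinearMap.id + TensorProduct.map sM dN

/-- The grading of the tensor product of two graded modules. -/
def tensorGrading {N : Type*} [AddCommGroup N] [Module k N]
    (𝒜 : ℕ → Submodule k M) (ℬ : ℕ → Submodule k N) (n : ℕ) :
    Submodule k (M ⊗[k] N) :=
  ⨆ p : {p : ℕ × ℕ // p.1 + p.2 = n},
    LinearMap.range (TensorProduct.map (𝒜 p.1.1).subtype (ℬ p.1.2).subtype)

end DGA

section DiffCalc

variable (k) in
/-- A differential calculus on an algebra `A`: a differential graded algebra
`Ω` with degree-zero part `A` (embedded via `ι`), generated in degree zero. -/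
structure DiffCalc (A : Type*) [Ring A] [Algebra k A]
    (Ω : Type*) [Ring Ω] [Algebra k Ω] extends DGA k Ω where
  ι : A →ₐ[k] Ω
  ι_injective : Function.Injective ι
  range_ι : ∀ x, x ∈ grading 0 ↔ x ∈ Set.range ι
  generated : Algebra.adjoin k (Set.range ι ∪ ⇑d '' Set.range ι) = ⊤

variable {A : Type*} [Ring A] [Algebra k A]
variable {Ω : Type*} [Ring Ω] [Algebra k Ω]

lemma DiffCalc.ι_mem (C : DiffCalc k A Ω) (a : A) : C.ι a ∈ C.grading 0 :=
  (C.range_ι _).2 ⟨a, rfl⟩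

lemma DiffCalc.d_ι_mem (C : DiffCalc k A Ω) (a : A) : C.d (C.ι a) ∈ C.grading 1 := by
  simpa using C.d_mem 0 (C.ι a) (C.ι_mem a)

lemma DiffCalc.sandwich_mem (C : DiffCalc k A Ω) (a b : A) {x : Ω}
    (hx : x ∈ C.grading 1) : C.ι a * x * C.ι b ∈ C.grading 1 := by
  letI := C.gradedAlgebra
  have h1 : C.ι a * x ∈ C.grading (0 + 1) := SetLike.mul_mem_graded (C.ι_mem a) hx
  have h2 : C.ι a * x * C.ι b ∈ C.grading (0 + 1 + 0) :=
    SetLike.mul_mem_graded h1 (C.ι_mem b)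
  simpa using h2

/-- The degree-zero identification `A ≃ Ω⁰`. -/
def DiffCalc.iota0 (C : DiffCalc k A Ω) : A ≃ₗ[k] ↥(C.grading 0) :=
  LinearEquiv.ofBijective (LinearMap.codRestrict (C.grading 0) C.ι.toLinearMap C.ι_mem)
    ⟨fun a b hab => C.ι_injective (congrArg Subtype.val hab),
     fun y => by
      obtain ⟨a, ha⟩ := (C.range_ι ↑y).1 y.2
      exact ⟨a, Subtype.ext ha⟩⟩

/-- Projection `Ω → A` onto the degree-zero component. -/
def DiffCalc.proj0 (C : DiffCalc k A Ω) : Ω →ₗ[k] A :=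
  letI := C.gradedAlgebra
  C.iota0.symm.toLinearMap ∘ₗ DirectSum.component k ℕ (fun i => ↥(C.grading i)) 0 ∘ₗ
    (DirectSum.decomposeLinearEquiv C.grading).toLinearMap

end DiffCalc

/-! ## Covariant calculi -/

section Covariant

variable {H : Type*} [Ring H] [Bialgebra k H]
variable {A : Type*} [Ring A] [Algebra k A]
variable {Ω : Type*} [Ring Ω] [Algebra k Ω]

/-- The comultiplication of a bialgebra, as a comodule-algebra structure of
`H` over itself. -/
def comulComod (k : Type*) [CommRing k] (H : Type*) [Ring H] [Bialgebra k H] :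
    ComodAlg k H H where
  ρ := Bialgebra.comulAlgHom k H
  coaction := by
    constructor
    · exact Coalgebra.lTensor_counit_comp_comul
    · exact Coalgebra.coassoc

/-- A right `H`-covariant differential calculus on a comodule algebra `A`:
the coaction `ΔR` extends `ρ` multiplicatively, degree-wise, and commutes
with the differential. -/
def IsRightCovariant (S : ComodAlg k H A) (C : DiffCalc k A Ω)
    (ΔR : Ω →ₗ[k] Ω ⊗[k] H) : Prop :=
  IsRightCoaction (k := k) ΔR ∧
  ΔR 1 = 1 ∧ (∀ x y, ΔR (x * y) = ΔR x * ΔR y) ∧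
  (∀ n, ∀ x ∈ C.grading n,
    ΔR x ∈ LinearMap.range (LinearMap.rTensor H (C.grading n).subtype)) ∧
  ΔR ∘ₗ C.d = LinearMap.rTensor H C.d ∘ₗ ΔR ∧
  ΔR ∘ₗ C.ι.toLinearMap = LinearMap.rTensor H C.ι.toLinearMap ∘ₗ S.ρ.toLinearMap

/-- A left-covariant differential calculus on the Hopf algebra `H` itself:
the left coaction `ΛL` extends the comultiplication. -/
def IsLeftCovariantH (C : DiffCalc k H Ω) (ΛL : Ω →ₗ[k] H ⊗[k] Ω) : Prop :=
  IsLeftCoaction (k := k) ΛL ∧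
  ΛL 1 = 1 ∧ (∀ x y, ΛL (x * y) = ΛL x * ΛL y) ∧
  (∀ n, ∀ x ∈ C.grading n,
    ΛL x ∈ LinearMap.range (LinearMap.lTensor H (C.grading n).subtype)) ∧
  ΛL ∘ₗ C.d = LinearMap.lTensor H C.d ∘ₗ ΛL ∧
  ΛL ∘ₗ C.ι.toLinearMap =
    LinearMap.lTensor H C.ι.toLinearMap ∘ₗ Coalgebra.comul (R := k) (A := H)

/-- A bicovariant differential calculus on `H`: commuting right and left
covariant structures both extending the comultiplication. -/
def IsBicovariantH (C : DiffCalc k H Ω) (ΔR : Ω →ₗ[k] Ω ⊗[k] H)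
    (ΛL : Ω →ₗ[k] H ⊗[k] Ω) : Prop :=
  IsRightCovariant (comulComod k H) C ΔR ∧ IsLeftCovariantH C ΛL ∧
  LinearMap.rTensor H ΛL ∘ₗ ΔR =
    (TensorProduct.assoc k H Ω H).symm.toLinearMap ∘ₗ LinearMap.lTensor H ΔR ∘ₗ ΛL

/-- Left-coinvariant elements of a left comodule. -/
def leftCoinv {M : Type*} [AddCommGroup M] [Module k M]
    (lam : M →ₗ[k] H ⊗[k] M) : Submodule k M where
  carrier := {m | lam m = 1 ⊗ₜ[k] m}
  add_mem' := by
    intro a b ha hb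
    simp only [Set.mem_setOf_eq] at *
    rw [map_add, ha, hb, TensorProduct.tmul_add]
  zero_mem' := by simp
  smul_mem' := by
    intro c m hm
    simp only [Set.mem_setOf_eq] at *
    rw [map_smul, hm, TensorProduct.tmul_smul]

end Covariant

/-! ## Maximal prolongations -/

section MaxProl

universe u

variable {A : Type*} [Ring A] [Algebra k A]
variable {Ω : Type*} [Ring Ω] [Algebra k Ω]

/-- `g` identifies the first-order parts of the differential calculi `C` and
`C'` (as first order differential calculi over `A`). -/
def Matches1 {Ω' : Type*} [Ring Ω'] [Algebra k Ω'] (C : DiffCalc k A Ω)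
    (C' : DiffCalc k A Ω') (g : ↥(C.grading 1) →ₗ[k] Ω') : Prop :=
  (∀ x : C.grading 1, g x ∈ C'.grading 1) ∧
  Function.Injective g ∧
  (∀ y ∈ C'.grading 1, ∃ x, g x = y) ∧
  (∀ a : A, g ⟨C.d (C.ι a), C.d_ι_mem a⟩ = C'.d (C'.ι a)) ∧
  (∀ (a b : A) (x : C.grading 1),
    g ⟨C.ι a * ↑x * C.ι b, C.sandwich_mem a b x.2⟩ = C'.ι a * g x * C'.ι b)

/-- `C` is the maximal prolongation of its own first-order part: any other
differential calculus on `A` with the same first order is a quotient of `C`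
(universal property of the maximal prolongation). -/
def IsMaxProl (C : DiffCalc k A Ω) : Prop :=
  ∀ (Ω' : Type u) [Ring Ω'] [Algebra k Ω'], ∀ (C' : DiffCalc k A Ω')
    (g : ↥(C.grading 1) →ₗ[k] Ω'), Matches1 C C' g →
    ∃ Φ : Ω →ₐ[k] Ω',
      (∀ n, ∀ x ∈ C.grading n, Φ x ∈ C'.grading n) ∧
      (∀ x, Φ (C.d x) = C'.d (Φ x)) ∧
      (∀ a, Φ (C.ι a) = C'.ι a) ∧
      (∀ x : C.grading 1, Φ ↑x = g x)

end MaxProl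

/-! ## Complete calculi -/

section Complete

variable {H : Type*} [Ring H] [HopfAlgebra k H]
variable {A : Type*} [Ring A] [Algebra k A]
variable {ΩA : Type*} [Ring ΩA] [Algebra k ΩA]
variable {ΩH : Type*} [Ring ΩH] [Algebra k ΩH]

/-- `D` is an extension of the coaction `ρ : A → A ⊗ H` to a morphism of
differential graded algebras `Ω(A) → Ω(A) ⊗ Ω(H)` (Koszul signs built into
the target); i.e. the calculus `Ω(A)` is *complete* with extension `D`. -/
def IsCompleteExt (S : ComodAlg k H A) (CA : DiffCalc k A ΩA)
    (CH : DiffCalc k H ΩH) (D : ΩA →ₗ[k] ΩA ⊗[k] ΩH) : Prop :=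
  D 1 = 1 ⊗ₜ[k] 1 ∧
  (∀ x y, D (x * y) = koszulMul CA.toDGA CH.toDGA (D x ⊗ₜ[k] D y)) ∧
  D ∘ₗ CA.ι.toLinearMap =
    TensorProduct.map CA.ι.toLinearMap CH.ι.toLinearMap ∘ₗ S.ρ.toLinearMap ∧
  D ∘ₗ CA.d = dTensorGen CA.d CA.toDGA.sign CH.d ∘ₗ D ∧
  (∀ n, ∀ x ∈ CA.grading n, D x ∈ tensorGrading CA.grading CH.grading n)

/-- A complete calculus on the Hopf algebra `H` itself: the comultiplication
extends to a morphism of differential graded algebras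
`Ω(H) → Ω(H) ⊗ Ω(H)`. -/
def IsCompleteExtH (CH : DiffCalc k H ΩH) (D : ΩH →ₗ[k] ΩH ⊗[k] ΩH) : Prop :=
  IsCompleteExt (comulComod k H) CH CH D

/-- The graded counit `ε•` of a complete calculus on `H`: the counit in degree
zero and zero in positive degrees. -/
def epsBul (CH : DiffCalc k H ΩH) : ΩH →ₗ[k] k :=
  Coalgebra.counit (R := k) (A := H) ∘ₗ CH.proj0

end Complete

end NCG
namespace NCG

variable {k : Type*} [CommRing k]

/-! ## First order differential calculi -/

section FODC

variable (k) in
/-- A first order differential calculus `(Γ, d)` on `A`: an `A`-bimodule `Γ`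
(with explicit structure maps) together with a derivation `d : A → Γ`
generating `Γ`. -/
structure FODC (A : Type*) [Ring A] [Algebra k A]
    (Γ : Type*) [AddCommGroup Γ] [Module k Γ] where
  lsmul : A →ₗ[k] Γ →ₗ[k] Γ
  rsmul : A →ₗ[k] Γ →ₗ[k] Γ
  one_lsmul : ∀ x, lsmul 1 x = x
  one_rsmul : ∀ x, rsmul 1 x = x
  mul_lsmul : ∀ a b x, lsmul (a * b) x = lsmul a (lsmul b x)
  mul_rsmul : ∀ a b x, rsmul (a * b) x = rsmul b (rsmul a x)
  lsmul_rsmul : ∀ a b x, lsmul a (rsmul b x) = rsmul b (lsmul a x)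
  d : A →ₗ[k] Γ
  leibniz : ∀ a b, d (a * b) = lsmul a (d b) + rsmul b (d a)
  surj : Submodule.span k {x | ∃ a b, x = lsmul a (d b)} = ⊤

end FODC

/-! ## Diagonal actions on tensor products -/

section ActionHelpers

variable {A H Γ : Type*} [Ring A] [Algebra k A] [Ring H] [Algebra k H]
variable [AddCommGroup Γ] [Module k Γ]

/-- Left action of `A ⊗ H` on `Γ ⊗ H`: `(a ⊗ h) ⊳ (x ⊗ g) = (a ⊳ x) ⊗ h g`. -/
def lactTH (act : A →ₗ[k] Γ →ₗ[k] Γ) :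
    (A ⊗[k] H) →ₗ[k] (Γ ⊗[k] H) →ₗ[k] Γ ⊗[k] H :=
  TensorProduct.curry
    (TensorProduct.map (TensorProduct.lift act) (LinearMap.mul' k H) ∘ₗ
      (TensorProduct.tensorTensorTensorComm k A H Γ H).toLinearMap)

/-- Right action of `A ⊗ H` on `Γ ⊗ H`: `(x ⊗ g) ⊲ (a ⊗ h) = (x ⊲ a) ⊗ g h`. -/
def ractTH (act : A →ₗ[k] Γ →ₗ[k] Γ) :
    (A ⊗[k] H) →ₗ[k] (Γ ⊗[k] H) →ₗ[k] Γ ⊗[k] H :=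
  TensorProduct.curry
    (TensorProduct.map (TensorProduct.lift act)
        (LinearMap.mul' k H ∘ₗ (TensorProduct.comm k H H).toLinearMap) ∘ₗ
      (TensorProduct.tensorTensorTensorComm k A H Γ H).toLinearMap)

/-- Left action of `A ⊗ H` on `A ⊗ Γ`: `(a ⊗ h) ⊳ (c ⊗ x) = a c ⊗ (h ⊳ x)`. -/
def lactHT (act : H →ₗ[k] Γ →ₗ[k] Γ) :
    (A ⊗[k] H) →ₗ[k] (A ⊗[k] Γ) →ₗ[k] A ⊗[k] Γ :=
  TensorProduct.curry
    (TensorProduct.map (LinearMap.mul' k A) (TensorProduct.lift act) ∘ₗ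
      (TensorProduct.tensorTensorTensorComm k A H A Γ).toLinearMap)

/-- Right action of `A ⊗ H` on `A ⊗ Γ`: `(c ⊗ x) ⊲ (a ⊗ h) = c a ⊗ (x ⊲ h)`. -/
def ractHT (act : H →ₗ[k] Γ →ₗ[k] Γ) :
    (A ⊗[k] H) →ₗ[k] (A ⊗[k] Γ) →ₗ[k] A ⊗[k] Γ :=
  TensorProduct.curry
    (TensorProduct.map (LinearMap.mul' k A ∘ₗ (TensorProduct.comm k A A).toLinearMap)
        (TensorProduct.lift act) ∘ₗ
      (TensorProduct.tensorTensorTensorComm k A H A Γ).toLinearMap)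

end ActionHelpers

/-! ## Covariant first order calculi and first order extensions -/

section FODCCov

variable {H : Type*} [Ring H] [Bialgebra k H]
variable {A : Type*} [Ring A] [Algebra k A]
variable {Γ : Type*} [AddCommGroup Γ] [Module k Γ]
variable {ΓH : Type*} [AddCommGroup ΓH] [Module k ΓH]

/-- Right `H`-covariance of a FODC `(Γ, d)` on a comodule algebra `A`. -/
def FODC.IsRightCovariant (S : ComodAlg k H A) (C : FODC k A Γ)
    (ΔΓ : Γ →ₗ[k] Γ ⊗[k] H) : Prop :=
  IsRightCoaction (k := k) ΔΓ ∧
  (∀ a x, ΔΓ (C.lsmul a x) = lactTH C.lsmul (S.ρ a) (ΔΓ x)) ∧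
  (∀ a x, ΔΓ (C.rsmul a x) = ractTH C.rsmul (S.ρ a) (ΔΓ x)) ∧
  ΔΓ ∘ₗ C.d = LinearMap.rTensor H C.d ∘ₗ S.ρ.toLinearMap

/-- Left covariance of a FODC `(Γ, d)` on the Hopf algebra `H` itself. -/
def FODC.IsLeftCovariantH (C : FODC k H Γ) (ΛΓ : Γ →ₗ[k] H ⊗[k] Γ) : Prop :=
  IsLeftCoaction (k := k) ΛΓ ∧
  (∀ h x, ΛΓ (C.lsmul h x) =
    lactHT C.lsmul (Coalgebra.comul (R := k) (A := H) h) (ΛΓ x)) ∧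
  (∀ h x, ΛΓ (C.rsmul h x) =
    ractHT C.rsmul (Coalgebra.comul (R := k) (A := H) h) (ΛΓ x)) ∧
  ΛΓ ∘ₗ C.d = LinearMap.lTensor H C.d ∘ₗ Coalgebra.comul (R := k) (A := H)

/-- Bicovariance of a FODC on `H`: commuting right and left covariant
structures. -/
def FODC.IsBicovariantH (C : FODC k H Γ) (ΔΓ : Γ →ₗ[k] Γ ⊗[k] H)
    (ΛΓ : Γ →ₗ[k] H ⊗[k] Γ) : Prop :=
  FODC.IsRightCovariant (comulComod k H) C ΔΓ ∧ FODC.IsLeftCovariantH C ΛΓ ∧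
  LinearMap.rTensor H ΛΓ ∘ₗ ΔΓ =
    (TensorProduct.assoc k H Γ H).symm.toLinearMap ∘ₗ LinearMap.lTensor H ΔΓ ∘ₗ ΛΓ

/-- `D` is an extension of the coaction `ρ : A → A ⊗ H` to a morphism of first
order differential calculi `Γ_A → Ω¹(A ⊗ H) = (Γ_A ⊗ H) ⊕ (A ⊗ Γ_H)`, i.e.
a map covering `ρ`, `ρ`-bilinear and intertwining `d` with `d_⊗`. -/
def IsFirstOrderExt (S : ComodAlg k H A) (CA : FODC k A Γ) (CHf : FODC k H ΓH)
    (D : Γ →ₗ[k] (Γ ⊗[k] H) × (A ⊗[k] ΓH)) : Prop :=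
  (∀ a x, D (CA.lsmul a x) =
    (lactTH CA.lsmul (S.ρ a) (D x).1, lactHT CHf.lsmul (S.ρ a) (D x).2)) ∧
  (∀ a x, D (CA.rsmul a x) =
    (ractTH CA.rsmul (S.ρ a) (D x).1, ractHT CHf.rsmul (S.ρ a) (D x).2)) ∧
  D ∘ₗ CA.d =
    (LinearMap.rTensor H CA.d ∘ₗ S.ρ.toLinearMap).prod
      (LinearMap.lTensor A CHf.d ∘ₗ S.ρ.toLinearMap)

end FODCCov

/-! ## Vertical forms -/

section Vertical

variable {H : Type*} [Ring H] [HopfAlgebra k H]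
variable {A : Type*} [Ring A] [Algebra k A]
variable {ΩH : Type*} [Ring ΩH] [Algebra k ΩH]

/-- Two-sided multiplication `Ω ⊗ Ω →ₗ (Ω →ₗ Ω)`, `(x ⊗ z) ↦ (y ↦ x y z)`. -/
def bimul (Ω : Type*) [Ring Ω] [Algebra k Ω] : Ω ⊗[k] Ω →ₗ[k] Ω →ₗ[k] Ω :=
  TensorProduct.lift
    ((LinearMap.llcomp k Ω Ω Ω ∘ₗ LinearMap.mul k Ω).compl₂ (LinearMap.mul k Ω).flip)

/-- The right adjoint action `ω ↼ h = S(h₁) ω h₂` of `H` on forms `Ω(H)`. -/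
def adAct (CH : DiffCalc k H ΩH) : H →ₗ[k] ΩH →ₗ[k] ΩH :=
  bimul ΩH ∘ₗ
    TensorProduct.map (CH.ι.toLinearMap ∘ₗ HopfAlgebra.antipode (R := k))
      CH.ι.toLinearMap ∘ₗ
    Coalgebra.comul (R := k) (A := H)

/-- The Cartan–Maurer map `h ↦ ϖ(π_ε(h)) = S(h₁) d(h₂)`. -/
def cartan (CH : DiffCalc k H ΩH) : H →ₗ[k] ΩH :=
  LinearMap.mul' k ΩH ∘ₗ
    TensorProduct.map (CH.ι.toLinearMap ∘ₗ HopfAlgebra.antipode (R := k))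
      (CH.d ∘ₗ CH.ι.toLinearMap) ∘ₗ
    Coalgebra.comul (R := k) (A := H)

/-- The projection `π_Λ : ω ↦ S(ω₋₁) ω₀` onto left-coinvariant forms. -/
def piLam (CH : DiffCalc k H ΩH) (ΛL : ΩH →ₗ[k] H ⊗[k] ΩH) : ΩH →ₗ[k] ΩH :=
  LinearMap.mul' k ΩH ∘ₗ
    TensorProduct.map (CH.ι.toLinearMap ∘ₗ HopfAlgebra.antipode (R := k))
      LinearMap.id ∘ₗ ΛL

/-- The multiplication `(a ⊗ ϑ) ∧ (a' ⊗ ϑ') = a a'₍₀₎ ⊗ (ϑ ↼ a'₍₁₎) ∧ ϑ'` of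
vertical forms, as a map on the ambient space `A ⊗ Ω(H)`. -/
def verMul (S : ComodAlg k H A) (CH : DiffCalc k H ΩH) :
    (A ⊗[k] ΩH) ⊗[k] (A ⊗[k] ΩH) →ₗ[k] A ⊗[k] ΩH :=
  TensorProduct.map (LinearMap.mul' k A)
      (LinearMap.mul' k ΩH ∘ₗ
        LinearMap.rTensor ΩH (TensorProduct.lift (adAct CH).flip) ∘ₗ
        (TensorProduct.assoc k ΩH H ΩH).symm.toLinearMap) ∘ₗ
    (TensorProduct.tensorTensorTensorComm k A ΩH A (H ⊗[k] ΩH)).toLinearMap ∘ₗ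
    LinearMap.lTensor (A ⊗[k] ΩH)
      ((TensorProduct.assoc k A H ΩH).toLinearMap ∘ₗ
        LinearMap.rTensor ΩH S.ρ.toLinearMap)

/-- The vertical differential
`d_v(a ⊗ ϑ) = a ⊗ dϑ + a₍₀₎ ⊗ ϖ(π_ε(a₍₁₎)) ∧ ϑ`. -/
def verD (S : ComodAlg k H A) (CH : DiffCalc k H ΩH) :
    A ⊗[k] ΩH →ₗ[k] A ⊗[k] ΩH :=
  LinearMap.lTensor A CH.d +
    LinearMap.lTensor A
        (LinearMap.mul' k ΩH ∘ₗ LinearMap.rTensor ΩH (cartan CH)) ∘ₗ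
      (TensorProduct.assoc k A H ΩH).toLinearMap ∘ₗ
      LinearMap.rTensor ΩH S.ρ.toLinearMap

/-- The vertical forms `ver• = A ⊗ Λ•` as a submodule of `A ⊗ Ω(H)`. -/
def verSub (A : Type*) [Ring A] [Algebra k A] (ΛL : ΩH →ₗ[k] H ⊗[k] ΩH) :
    Submodule k (A ⊗[k] ΩH) :=
  LinearMap.range (LinearMap.lTensor A (leftCoinv ΛL).subtype)

/-- The degree-`n` vertical forms `ver^n = A ⊗ Λⁿ`. -/
def verSubN (A : Type*) [Ring A] [Algebra k A] (CH : DiffCalc k H ΩH)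
    (ΛL : ΩH →ₗ[k] H ⊗[k] ΩH) (n : ℕ) : Submodule k (A ⊗[k] ΩH) :=
  LinearMap.range (LinearMap.lTensor A ((leftCoinv ΛL ⊓ CH.grading n)).subtype)

end Vertical

/-! ## Quotient multiplications on balanced tensor products -/

section QuotMul

variable {A : Type*} [Ring A] [Algebra k A]

/-- Left multiplication (by `x`) on the first leg of `A ⊗ A`, followed by the
projection onto `A ⊗_B A`. -/
def lmulQaux (B : Submodule k A) (x : A) :
    A ⊗[k] A →ₗ[k] TensorOver (k := k) B :=
  (balRel B).mkQ ∘ₗ LinearMap.rTensor A (LinearMap.mul k A x)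

lemma lmulQaux_rel (B : Submodule k A) (x : A) :
    balRel (k := k) B ≤ LinearMap.ker (lmulQaux B x) := by
  refine Submodule.span_le.mpr ?_
  rintro z ⟨a, a', b, rfl⟩
  simp only [SetLike.mem_coe, LinearMap.mem_ker, lmulQaux, LinearMap.coe_comp,
    Function.comp_apply, map_sub, LinearMap.rTensor_tmul, LinearMap.mul_apply']
  rw [← map_sub, Submodule.mkQ_apply, Submodule.Quotient.mk_eq_zero]
  apply Submodule.subset_span
  exact ⟨x * a, a', b, by rw [mul_assoc]⟩

/-- Left multiplication on the first leg of `A ⊗_B A`. -/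
def lmulQ (B : Submodule k A) :
    A →ₗ[k] TensorOver (k := k) B →ₗ[k] TensorOver (k := k) B where
  toFun x := Submodule.liftQ _ (lmulQaux B x) (lmulQaux_rel B x)
  map_add' x y := by
    apply Submodule.linearMap_qext
    simp only [Submodule.liftQ_mkQ, LinearMap.add_comp, Submodule.liftQ_mkQ]
    simp only [lmulQaux, map_add, LinearMap.rTensor_add, LinearMap.comp_add]
  map_smul' c x := by
    apply Submodule.linearMap_qext
    simp only [RingHom.id_apply, Submodule.liftQ_mkQ, LinearMap.smul_comp,
      Submodule.liftQ_mkQ]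
    simp only [lmulQaux, map_smul, LinearMap.rTensor_smul, LinearMap.comp_smul]

/-- Right multiplication (by `x`) on the second leg of `A ⊗ A`, followed by
the projection onto `A ⊗_B A`. -/
def rmulQaux (B : Submodule k A) (x : A) :
    A ⊗[k] A →ₗ[k] TensorOver (k := k) B :=
  (balRel B).mkQ ∘ₗ LinearMap.lTensor A ((LinearMap.mul k A).flip x)

lemma rmulQaux_rel (B : Submodule k A) (x : A) :
    balRel (k := k) B ≤ LinearMap.ker (rmulQaux B x) := by
  refine Submodule.span_le.mpr ?_
  rintro z ⟨a, a', b, rfl⟩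
  simp only [SetLike.mem_coe, LinearMap.mem_ker, rmulQaux, LinearMap.coe_comp,
    Function.comp_apply, map_sub, LinearMap.lTensor_tmul, LinearMap.flip_apply,
    LinearMap.mul_apply']
  rw [← map_sub, Submodule.mkQ_apply, Submodule.Quotient.mk_eq_zero]
  apply Submodule.subset_span
  exact ⟨a, a' * x, b, by rw [mul_assoc]⟩

/-- Right multiplication on the second leg of `A ⊗_B A`. -/
def rmulQ (B : Submodule k A) :
    A →ₗ[k] TensorOver (k := k) B →ₗ[k] TensorOver (k := k) B where
  toFun x := Submodule.liftQ _ (rmulQaux B x) (rmulQaux_rel B x)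
  map_add' x y := by
    apply Submodule.linearMap_qext
    simp only [Submodule.liftQ_mkQ, LinearMap.add_comp, Submodule.liftQ_mkQ]
    simp only [rmulQaux, map_add, LinearMap.lTensor_add, LinearMap.comp_add]
  map_smul' c x := by
    apply Submodule.linearMap_qext
    simp only [RingHom.id_apply, Submodule.liftQ_mkQ, LinearMap.smul_comp,
      Submodule.liftQ_mkQ]
    simp only [rmulQaux, map_smul, LinearMap.lTensor_smul, LinearMap.comp_smul]

end QuotMul

/-! ## Base, horizontal and balanced graded forms -/

section GradedHG

variable {H : Type*} [Ring H] [HopfAlgebra k H]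
variable {A : Type*} [Ring A] [Algebra k A]
variable {ΩA : Type*} [Ring ΩA] [Algebra k ΩA]
variable {ΩH : Type*} [Ring ΩH] [Algebra k ΩH]

/-- The base forms `Ω•(B)`: forms invariant under the extended coaction. -/
def baseForms (D : ΩA →ₗ[k] ΩA ⊗[k] ΩH) : Submodule k ΩA where
  carrier := {ω | D ω = ω ⊗ₜ[k] 1}
  add_mem' := by
    intro a b ha hb
    simp only [Set.mem_setOf_eq] at *
    rw [map_add, ha, hb, TensorProduct.add_tmul]
  zero_mem' := by simp
  smul_mem' := by
    intro c a ha
    simp only [Set.mem_setOf_eq] at *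
    rw [map_smul, ha, TensorProduct.smul_tmul']

/-- The horizontal forms `hor• = (Δ_A•)⁻¹(Ω•(A) ⊗ H)`. -/
def horForms (CH : DiffCalc k H ΩH) (D : ΩA →ₗ[k] ΩA ⊗[k] ΩH) : Submodule k ΩA :=
  Submodule.comap D (LinearMap.range (LinearMap.lTensor ΩA CH.ι.toLinearMap))

/-- The lift `Ω(A) ⊗ Ω(A) → Ω(A) ⊗ Ω(H)`, `ω ⊗ η ↦ (ω ∧ η₍₀₎) ⊗ η₍₁₎` of the
graded canonical Hopf–Galois map. -/
def chiBulAux (D : ΩA →ₗ[k] ΩA ⊗[k] ΩH) : ΩA ⊗[k] ΩA →ₗ[k] ΩA ⊗[k] ΩH :=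
  LinearMap.rTensor ΩH (LinearMap.mul' k ΩA) ∘ₗ
    (TensorProduct.assoc k ΩA ΩA ΩH).symm.toLinearMap ∘ₗ LinearMap.lTensor ΩA D

end GradedHG

end NCG

/-! Since `Γ = H dH`, the map `ψ : H ⊗ H → Γ`, `a ⊗ b ↦ a db`, is onto, and a first order
extension `D` of `Δ` is forced on its image: `D (a db) = (a₁ db₁ ⊗ a₂ b₂, a₁ b₁ ⊗ a₂ db₂)`.
So `D` is unique, and its two components are the push-forwards along `ψ` of the right and left
`H`-coactions `(id ⊗ m) Δ` and `(m ⊗ id) Δ` of the coalgebra `H ⊗ H` (the multiplication `m`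
is a coalgebra map). Counitality, coassociativity and the commutation of the two coactions
descend along the surjection `ψ`, so `Γ` is bicovariant. Conversely, the two coactions of a
bicovariant calculus assemble into such an extension. -/

namespace NCG

section Coaction

variable {k : Type*} [CommRing k] {H : Type*} [AddCommMonoid H] [Module k H]
variable {M N : Type*} [AddCommMonoid M] [Module k M] [AddCommMonoid N] [Module k N]

lemma IsRightCoaction.of_surjective [Coalgebra k H]
    {ρM : M →ₗ[k] M ⊗[k] H} {ρN : N →ₗ[k] N ⊗[k] H} (hM : IsRightCoaction ρM)
    (ψ : M →ₗ[k] N) (hψ : Function.Surjective ψ)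
    (h : ρN ∘ₗ ψ = LinearMap.rTensor H ψ ∘ₗ ρM) : IsRightCoaction ρN := by
  obtain ⟨hε, hΔ⟩ := hM
  constructor
  · rw [← LinearMap.cancel_right hψ]
    calc _ = LinearMap.rTensor k ψ ∘ₗ LinearMap.lTensor M Coalgebra.counit ∘ₗ ρM := by
          rw [LinearMap.comp_assoc, h, ← LinearMap.comp_assoc, LinearMap.lTensor_comp_rTensor,
            ← LinearMap.rTensor_comp_lTensor, LinearMap.comp_assoc]
      _ = _ := by rw [hε]; ext; simp
  · rw [← LinearMap.cancel_right hψ]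
    calc _ = LinearMap.rTensor (H ⊗[k] H) ψ ∘ₗ (TensorProduct.assoc k M H H).toLinearMap ∘ₗ
          LinearMap.rTensor H ρM ∘ₗ ρM := by
          simp only [LinearMap.comp_assoc, h, coassoc_simps]
      _ = _ := by
          rw [hΔ, ← LinearMap.comp_assoc, LinearMap.rTensor_comp_lTensor,
            ← LinearMap.lTensor_comp_rTensor, LinearMap.comp_assoc, ← h, LinearMap.comp_assoc]

lemma IsLeftCoaction.of_surjective [Coalgebra k H]
    {lamM : M →ₗ[k] H ⊗[k] M} {lamN : N →ₗ[k] H ⊗[k] N} (hM : IsLeftCoaction lamM)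
    (ψ : M →ₗ[k] N) (hψ : Function.Surjective ψ)
    (h : lamN ∘ₗ ψ = LinearMap.lTensor H ψ ∘ₗ lamM) : IsLeftCoaction lamN := by
  obtain ⟨hε, hΔ⟩ := hM
  constructor
  · rw [← LinearMap.cancel_right hψ]
    calc _ = LinearMap.lTensor k ψ ∘ₗ LinearMap.rTensor M Coalgebra.counit ∘ₗ lamM := by
          rw [LinearMap.comp_assoc, h, ← LinearMap.comp_assoc, LinearMap.rTensor_comp_lTensor,
            ← LinearMap.lTensor_comp_rTensor, LinearMap.comp_assoc]
      _ = _ := by rw [hε]; ext; simp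
  · rw [← LinearMap.cancel_right hψ]
    calc _ = LinearMap.lTensor (H ⊗[k] H) ψ ∘ₗ
          (TensorProduct.assoc k H H M).symm.toLinearMap ∘ₗ LinearMap.lTensor H lamM ∘ₗ lamM := by
          simp only [LinearMap.comp_assoc, h, coassoc_simps]
      _ = _ := by
          rw [hΔ, ← LinearMap.comp_assoc, LinearMap.lTensor_comp_rTensor,
            ← LinearMap.rTensor_comp_lTensor, LinearMap.comp_assoc, ← h, LinearMap.comp_assoc]

lemma coactions_comm_of_surjective {ρM : M →ₗ[k] M ⊗[k] H} {lamM : M →ₗ[k] H ⊗[k] M}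
    {ρN : N →ₗ[k] N ⊗[k] H} {lamN : N →ₗ[k] H ⊗[k] N}
    (hM : LinearMap.rTensor H lamM ∘ₗ ρM =
      (TensorProduct.assoc k H M H).symm.toLinearMap ∘ₗ LinearMap.lTensor H ρM ∘ₗ lamM)
    (ψ : M →ₗ[k] N) (hψ : Function.Surjective ψ) (hρ : ρN ∘ₗ ψ = LinearMap.rTensor H ψ ∘ₗ ρM)
    (hlam : lamN ∘ₗ ψ = LinearMap.lTensor H ψ ∘ₗ lamM) :
    LinearMap.rTensor H lamN ∘ₗ ρN =
      (TensorProduct.assoc k H N H).symm.toLinearMap ∘ₗ LinearMap.lTensor H ρN ∘ₗ lamN := by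
  rw [← LinearMap.cancel_right hψ]
  calc _ = TensorProduct.map (LinearMap.lTensor H ψ) LinearMap.id ∘ₗ
        LinearMap.rTensor H lamM ∘ₗ ρM := by
        simp only [LinearMap.comp_assoc, hρ, hlam, coassoc_simps]
    _ = _ := by
        rw [hM]
        simp only [LinearMap.comp_assoc, hρ, hlam, coassoc_simps]

end Coaction

section CoalgHom

open Coalgebra

variable {k : Type*} [CommRing k] {C D : Type*} [AddCommMonoid C] [Module k C] [Coalgebra k C]
  [AddCommMonoid D] [Module k D] [Coalgebra k D]

lemma CoalgHom.isRightCoaction_lTensor_comp_comul (f : C →ₗc[k] D) :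
    IsRightCoaction (LinearMap.lTensor C f.toLinearMap ∘ₗ comul) := by
  constructor
  · rw [← LinearMap.comp_assoc, ← LinearMap.lTensor_comp, f.counit_comp,
      lTensor_counit_comp_comul]
  · simp only [coassoc_simps]
    rw [f.map_comp_comul]

lemma CoalgHom.isLeftCoaction_rTensor_comp_comul (f : C →ₗc[k] D) :
    IsLeftCoaction (LinearMap.rTensor C f.toLinearMap ∘ₗ comul) := by
  constructor
  · rw [← LinearMap.comp_assoc, ← LinearMap.rTensor_comp, f.counit_comp,
      rTensor_counit_comp_comul]
  · simp only [coassoc_simps]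
    rw [f.map_comp_comul]

lemma CoalgHom.coactions_comm (f : C →ₗc[k] D) :
    LinearMap.rTensor D (LinearMap.rTensor C f.toLinearMap ∘ₗ comul) ∘ₗ
        (LinearMap.lTensor C f.toLinearMap ∘ₗ comul) =
      (TensorProduct.assoc k D C D).symm.toLinearMap ∘ₗ
        LinearMap.lTensor D (LinearMap.lTensor C f.toLinearMap ∘ₗ comul) ∘ₗ
          (LinearMap.rTensor C f.toLinearMap ∘ₗ comul) := by
  simp only [coassoc_simps]

end CoalgHom

section FODC

variable {k : Type*} [CommRing k] {A H : Type*} [Ring A] [Algebra k A] [Ring H] [Algebra k H]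
variable {Γ : Type*} [AddCommGroup Γ] [Module k Γ]

def FODC.mulD (C : FODC k A Γ) : A ⊗[k] A →ₗ[k] Γ :=
  TensorProduct.lift (C.lsmul.compl₂ C.d)

@[simp] lemma FODC.mulD_tmul (C : FODC k A Γ) (a b : A) :
    C.mulD (a ⊗ₜ b) = C.lsmul a (C.d b) := rfl

lemma FODC.mulD_surjective (C : FODC k A Γ) : Function.Surjective C.mulD := by
  refine LinearMap.range_eq_top.mp (eq_top_iff.mpr (C.surj ▸ Submodule.span_le.mpr ?_))
  rintro _ ⟨a, b, rfl⟩
  exact ⟨a ⊗ₜ b, rfl⟩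

lemma FODC.lactTH_rTensor_d (C : FODC k A Γ) (x y : A ⊗[k] H) :
    lactTH C.lsmul x (LinearMap.rTensor H C.d y) =
      TensorProduct.map C.mulD (LinearMap.mul' k H)
        (TensorProduct.tensorTensorTensorComm k A H A H (x ⊗ₜ y)) := by
  induction x using TensorProduct.induction_on with
  | zero => simp
  | add x x' hx hx' => simp only [map_add, LinearMap.add_apply, hx, hx', TensorProduct.add_tmul]
  | tmul a h =>
    induction y using TensorProduct.induction_on with
    | zero => simp
    | add y y' hy hy' => simp only [map_add, hy, hy', TensorProduct.tmul_add]
    | tmul b g => simp [lactTH, LinearMap.mul'_apply]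

lemma FODC.lactHT_lTensor_d (C : FODC k H Γ) (x y : A ⊗[k] H) :
    lactHT C.lsmul x (LinearMap.lTensor A C.d y) =
      TensorProduct.map (LinearMap.mul' k A) C.mulD
        (TensorProduct.tensorTensorTensorComm k A H A H (x ⊗ₜ y)) := by
  induction x using TensorProduct.induction_on with
  | zero => simp
  | add x x' hx hx' => simp only [map_add, LinearMap.add_apply, hx, hx', TensorProduct.add_tmul]
  | tmul a h =>
    induction y using TensorProduct.induction_on with
    | zero => simp
    | add y y' hy hy' => simp only [map_add, hy, hy', TensorProduct.tmul_add]
    | tmul b g => simp [lactHT, LinearMap.mul'_apply]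

end FODC

section FirstOrderExt

variable {k : Type*} [CommRing k] {A H : Type*} [Ring A] [Algebra k A] [Ring H] [Bialgebra k H]
variable {Γ ΓH : Type*} [AddCommGroup Γ] [Module k Γ] [AddCommGroup ΓH] [Module k ΓH]
variable {S : ComodAlg k H A} {CA : FODC k A Γ} {CHf : FODC k H ΓH}

lemma IsFirstOrderExt.comp_mulD {D : Γ →ₗ[k] (Γ ⊗[k] H) × (A ⊗[k] ΓH)}
    (hD : IsFirstOrderExt S CA CHf D) :
    D ∘ₗ CA.mulD =
      (TensorProduct.map CA.mulD (LinearMap.mul' k H) ∘ₗ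
          (TensorProduct.tensorTensorTensorComm k A H A H).toLinearMap ∘ₗ
          TensorProduct.map S.ρ.toLinearMap S.ρ.toLinearMap).prod
        (TensorProduct.map (LinearMap.mul' k A) CHf.mulD ∘ₗ
          (TensorProduct.tensorTensorTensorComm k A H A H).toLinearMap ∘ₗ
          TensorProduct.map S.ρ.toLinearMap S.ρ.toLinearMap) := by
  obtain ⟨hl, -, hd⟩ := hD
  refine TensorProduct.ext' fun a b => ?_
  have hdb : D (CA.d b) = _ := LinearMap.congr_fun hd b
  rw [LinearMap.comp_apply, FODC.mulD_tmul, hl, hdb]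
  exact Prod.ext (CA.lactTH_rTensor_d _ _) (CHf.lactHT_lTensor_d _ _)

lemma IsFirstOrderExt.unique {D D' : Γ →ₗ[k] (Γ ⊗[k] H) × (A ⊗[k] ΓH)}
    (hD : IsFirstOrderExt S CA CHf D) (hD' : IsFirstOrderExt S CA CHf D') : D = D' :=
  (LinearMap.cancel_right CA.mulD_surjective).mp (hD.comp_mulD.trans hD'.comp_mulD.symm)

end FirstOrderExt

section Bicovariant

open Coalgebra

variable {k : Type*} [CommRing k] {H : Type*} [Ring H] [Bialgebra k H]
variable {Γ : Type*} [AddCommGroup Γ] [Module k Γ] {C : FODC k H Γ}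

lemma IsFirstOrderExt.fst_comp_mulD {D : Γ →ₗ[k] (Γ ⊗[k] H) × (H ⊗[k] Γ)}
    (hD : IsFirstOrderExt (comulComod k H) C C D) :
    (LinearMap.fst k _ _ ∘ₗ D) ∘ₗ C.mulD = LinearMap.rTensor H C.mulD ∘ₗ
      (LinearMap.lTensor (H ⊗[k] H) (Bialgebra.mulCoalgHom k H).toLinearMap ∘ₗ comul) := by
  rw [LinearMap.comp_assoc, hD.comp_mulD, LinearMap.fst_prod]
  conv_rhs => rw [← LinearMap.comp_assoc, LinearMap.rTensor_comp_lTensor]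
  rfl

lemma IsFirstOrderExt.snd_comp_mulD {D : Γ →ₗ[k] (Γ ⊗[k] H) × (H ⊗[k] Γ)}
    (hD : IsFirstOrderExt (comulComod k H) C C D) :
    (LinearMap.snd k _ _ ∘ₗ D) ∘ₗ C.mulD = LinearMap.lTensor H C.mulD ∘ₗ
      (LinearMap.rTensor (H ⊗[k] H) (Bialgebra.mulCoalgHom k H).toLinearMap ∘ₗ comul) := by
  rw [LinearMap.comp_assoc, hD.comp_mulD, LinearMap.snd_prod]
  conv_rhs => rw [← LinearMap.comp_assoc, LinearMap.lTensor_comp_rTensor]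
  rfl

lemma IsFirstOrderExt.isBicovariantH {D : Γ →ₗ[k] (Γ ⊗[k] H) × (H ⊗[k] Γ)}
    (hD : IsFirstOrderExt (comulComod k H) C C D) :
    C.IsBicovariantH (LinearMap.fst k _ _ ∘ₗ D) (LinearMap.snd k _ _ ∘ₗ D) := by
  have ⟨hl, hr, hd⟩ := hD
  refine ⟨⟨?_, fun a x => congrArg Prod.fst (hl a x), fun a x => congrArg Prod.fst (hr a x),
      by rw [LinearMap.comp_assoc, hd, LinearMap.fst_prod]⟩,
    ⟨?_, fun a x => congrArg Prod.snd (hl a x), fun a x => congrArg Prod.snd (hr a x),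
      by rw [LinearMap.comp_assoc, hd, LinearMap.snd_prod]; rfl⟩, ?_⟩
  · exact (CoalgHom.isRightCoaction_lTensor_comp_comul _).of_surjective _ C.mulD_surjective
      hD.fst_comp_mulD
  · exact (CoalgHom.isLeftCoaction_rTensor_comp_comul _).of_surjective _ C.mulD_surjective
      hD.snd_comp_mulD
  · exact coactions_comm_of_surjective (CoalgHom.coactions_comm _) _ C.mulD_surjective
      hD.fst_comp_mulD hD.snd_comp_mulD

lemma isFirstOrderExt_prod {ΔΓ : Γ →ₗ[k] Γ ⊗[k] H} {ΛΓ : Γ →ₗ[k] H ⊗[k] Γ}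
    (hR : C.IsRightCovariant (comulComod k H) ΔΓ) (hL : C.IsLeftCovariantH ΛΓ) :
    IsFirstOrderExt (comulComod k H) C C (ΔΓ.prod ΛΓ) :=
  ⟨fun a x => Prod.ext (hR.2.1 a x) (hL.2.1 a x),
    fun a x => Prod.ext (hR.2.2.1 a x) (hL.2.2.1 a x),
    by rw [LinearMap.prod_comp, hR.2.2.2, hL.2.2.2]; rfl⟩

end Bicovariant

theorem fodc_bicovariant_iff_comul_extends_general
    {k : Type*} [Field k] {H : Type*} [Ring H] [HopfAlgebra k H]
    {Γ : Type*} [AddCommGroup Γ] [Module k Γ] (C : FODC k H Γ) :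
    ((∃ D : Γ →ₗ[k] (Γ ⊗[k] H) × (H ⊗[k] Γ),
        IsFirstOrderExt (comulComod k H) C C D) ↔
      ∃ (ΔΓ : Γ →ₗ[k] Γ ⊗[k] H) (ΛΓ : Γ →ₗ[k] H ⊗[k] Γ),
        C.IsBicovariantH ΔΓ ΛΓ) ∧
    (∀ (ΔΓ : Γ →ₗ[k] Γ ⊗[k] H) (ΛΓ : Γ →ₗ[k] H ⊗[k] Γ),
      C.IsBicovariantH ΔΓ ΛΓ →
      ∀ D : Γ →ₗ[k] (Γ ⊗[k] H) × (H ⊗[k] Γ),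
        IsFirstOrderExt (comulComod k H) C C D → D = ΔΓ.prod ΛΓ) :=
  ⟨⟨fun ⟨_, hD⟩ => ⟨_, _, hD.isBicovariantH⟩,
      fun ⟨_, _, hR, hL, _⟩ => ⟨_, isFirstOrderExt_prod hR hL⟩⟩,
    fun _ _ ⟨hR, hL, _⟩ _ hD => hD.unique (isFirstOrderExt_prod hR hL)⟩

/-- A FODC `(Γ, d)` on a Hopf algebra `H` is bicovariant iff
the comultiplication extends to a morphism of FODCi
`Δ¹ : Γ → Ω¹(H ⊗ H) = (Γ ⊗ H) ⊕ (H ⊗ Γ)`; in this case `Δ¹ = Δ_Γ + _ΓΔ` is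
the pair of the right and left `H`-coactions on `Γ`. -/
theorem fodc_bicovariant_iff_comul_extends
    {k : Type*} [Field k] {H : Type*} [Ring H] [HopfAlgebra k H]
    (hS : Function.Bijective (HopfAlgebra.antipode (R := k) (A := H)))
    {Γ : Type*} [AddCommGroup Γ] [Module k Γ] (C : FODC k H Γ) :
    ((∃ D : Γ →ₗ[k] (Γ ⊗[k] H) × (H ⊗[k] Γ),
        IsFirstOrderExt (comulComod k H) C C D) ↔
      ∃ (ΔΓ : Γ →ₗ[k] Γ ⊗[k] H) (ΛΓ : Γ →ₗ[k] H ⊗[k] Γ),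
        C.IsBicovariantH ΔΓ ΛΓ) ∧
    (∀ (ΔΓ : Γ →ₗ[k] Γ ⊗[k] H) (ΛΓ : Γ →ₗ[k] H ⊗[k] Γ),
      C.IsBicovariantH ΔΓ ΛΓ →
      ∀ D : Γ →ₗ[k] (Γ ⊗[k] H) × (H ⊗[k] Γ),
        IsFirstOrderExt (comulComod k H) C C D → D = ΔΓ.prod ΛΓ) :=
  fodc_bicovariant_iff_comul_extends_general C

end NCG
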